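/- For every positive integer n, v(2n) = v(n)/2 and v(2n+1) = 1/3 + v(n)/2, where v(n) = V(n) - 2n/3. -/
import Mathlib


open Finset

/-- The largest odd divisor of `k`. -/
def oddPart (k : ℕ) : ℕ := ordCompl[2] k

/-- `V n = ∑_{k=1}^n α(k)/k` as a rational number. -/
def V (n : ℕ) : ℚ := ∑ k ∈ Finset.Icc 1 n, (oddPart k : ℚ) / k

/-- `v n = V n - 2n/3`. -/
def v (n : ℕ) : ℚ := V n - 2 * n / 3

/-- `U n = ∑_{k=1}^n α(k)`. -/
def U (n : ℕ) : ℕ := ∑ k ∈ Finset.Icc 1 n, oddPart k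

/-- `G n = ∑_{k=1}^n (n+1-k)·α(k)/k` as a rational number. -/
def G (n : ℕ) : ℚ := ∑ k ∈ Finset.Icc 1 n, ((n : ℚ) + 1 - k) * (oddPart k : ℚ) / k

/-- `g n = n(n+2)/3 - G n`. -/
def g (n : ℕ) : ℚ := n * (n + 2) / 3 - G n


lemma oddPart_odd (k : ℕ) (h : Odd k) : oddPart k = k := by
  unfold oddPart
  rw [Nat.factorization_eq_zero_of_not_dvd (by
    intro hd; exact (Nat.not_even_iff_odd.mpr h) (even_iff_two_dvd.mpr hd))]
  simp

lemma oddPart_two_mul (m : ℕ) : oddPart (2 * m) = oddPart m := by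
  unfold oddPart
  rw [Nat.ordCompl_mul]
  norm_num

lemma V_succ (n : ℕ) : V (n + 1) = V n + (oddPart (n + 1) : ℚ) / (n + 1) := by
  unfold V
  rw [Finset.sum_Icc_succ_top (by omega)]
  push_cast
  ring

lemma V_two_mul (n : ℕ) : V (2 * n) = n + V n / 2 := by
  induction n with
  | zero => simp [V]
  | succ m ih =>
    have h1 : 2 * (m + 1) = (2 * m + 1) + 1 := by ring
    rw [h1, V_succ, show 2*m+1 = (2*m)+1 from rfl, V_succ, ih, V_succ]
    have ho : oddPart (2 * m + 1) = 2 * m + 1 := oddPart_odd _ ⟨m, by ring⟩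
    have he : oddPart (2 * m + 1 + 1) = oddPart (m + 1) := by
      rw [show 2 * m + 1 + 1 = 2 * (m + 1) by ring, oddPart_two_mul]
    rw [ho, he]
    have h2 : ((2 * m : ℕ) + 1 : ℚ) ≠ 0 := by positivity
    have h3 : ((m : ℚ) + 1) ≠ 0 := by positivity
    push_cast
    field_simp
    ring

theorem stmt2 (n : ℕ) (hn : 0 < n) :
    v (2 * n) = v n / 2 ∧ v (2 * n + 1) = 1 / 3 + v n / 2 := by
  constructor
  · unfold v
    rw [V_two_mul]
    push_cast
    ring
  · unfold v
    rw [V_succ, V_two_mul, oddPart_odd _ ⟨n, by ring⟩]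
    have h2 : ((2 * n : ℕ) + 1 : ℚ) ≠ 0 := by positivity
    push_cast
    field_simp
    ring
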